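/- arXiv:1311.4387 — 7 statements merged into one kernel-verified Lean document; each statement's English description precedes it below -/
import Mathlib

section
/- For every integer p ≥ 1 and every sequence x : ℤ → ℝ, the forward difference of the refined sequence satisfies Δ(S_p x) = (1/2)·S_{p−1}(Δx), i.e. (S_p x)_{i+1} − (S_p x)_i = (1/2)·(S_{p−1}(Δx))_i for all i ∈ ℤ. -/
/-- The Lane–Riesenfeld (B-spline) subdivision operator `S p` on real sequences:
`(S 0 x) (2i) = (S 0 x) (2i+1) = x i` and `(S (p+1) x) i = ((S p x) i + (S p x) (i+1)) / 2`. -/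
noncomputable def S : ℕ → (ℤ → ℝ) → ℤ → ℝ
  | 0, x, i => x (Int.fdiv i 2)
  | p + 1, x, i => (S p x i + S p x (i + 1)) / 2

/-- Forward difference operator. -/
noncomputable def Δ (x : ℤ → ℝ) : ℤ → ℝ := fun i => x (i + 1) - x i

/-! A one-step difference of `S (p + 1) x` is half a two-step difference of `S p x`. For `p = 0`
this is half of `Δ x` at `⌊i / 2⌋`; for larger `p`, splitting the two-step difference into two
one-step differences and using induction yields the average defining `S (p + 1) (Δ x)`. -/

theorem Int.fdiv_add_two (i : ℤ) : Int.fdiv (i + 2) 2 = Int.fdiv i 2 + 1 := by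
  rw [Int.fdiv_eq_ediv_of_nonneg _ (by norm_num), Int.fdiv_eq_ediv_of_nonneg _ (by norm_num)]
  omega

theorem S_succ_apply_add_one_sub (p : ℕ) (x : ℤ → ℝ) (i : ℤ) :
    S (p + 1) x (i + 1) - S (p + 1) x i = (S p x (i + 2) - S p x i) / 2 := by
  simp only [S, add_assoc, one_add_one_eq_two]
  ring

theorem S_succ_apply_add_one_sub_eq_half_S_Δ (p : ℕ) (x : ℤ → ℝ) (i : ℤ) :
    S (p + 1) x (i + 1) - S (p + 1) x i = 1 / 2 * S p (Δ x) i := by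
  induction p generalizing i with
  | zero =>
    rw [S_succ_apply_add_one_sub]
    simp only [S, Δ, Int.fdiv_add_two]
    ring
  | succ p ih =>
    have two_steps : S (p + 1) x (i + 2) - S (p + 1) x i =
        (S (p + 1) x (i + 1 + 1) - S (p + 1) x (i + 1)) + (S (p + 1) x (i + 1) - S (p + 1) x i) := by
      rw [add_assoc, one_add_one_eq_two]
      ring
    rw [S_succ_apply_add_one_sub, two_steps, ih, ih, S]
    ring

/-- For every `p ≥ 1` and every sequence `x : ℤ → ℝ`,
`Δ(S_p x) = (1/2) · S_{p−1}(Δ x)`. -/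
theorem forward_difference_of_LaneRiesenfeld (p : ℕ) (hp : 1 ≤ p) (x : ℤ → ℝ) (i : ℤ) :
    S p x (i + 1) - S p x i = (1 / 2 : ℝ) * S (p - 1) (Δ x) i := by
  obtain ⟨q, rfl⟩ := Nat.exists_eq_add_of_le' hp
  exact S_succ_apply_add_one_sub_eq_half_S_Δ q x i
end

section
/- For every integer p ≥ 2, every real shift α, and every K ∈ ℤ, applying S_p to the sampled quadratic x_i = (i + α)² yields (S_p x)_K = t² + (p+1)/16, where t = K/2 + α + (p−1)/4. -/
/-!
`S 2` is Chaikin's corner cutting, `(S 2 x)_{2m} = (3 x_m + x_{m+1})/4` and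
`(S 2 x)_{2m+1} = (x_m + 3 x_{m+1})/4`; on the samples of `(i + α)²` it gives
`(K/2 + α + 1/4)² + 3/16`. Averaging neighbours of `K ↦ (K/2 + c)² + d` gives
`(K/2 + c + 1/4)² + d + 1/16`, so every further step shifts `c` by `1/4` and `d` by `1/16`.
-/

namespace S

variable (x : ℤ → ℝ) (m : ℤ)

theorem succ_apply (p : ℕ) (i : ℤ) : S (p + 1) x i = (S p x i + S p x (i + 1)) / 2 := rfl

theorem zero_two_mul : S 0 x (2 * m) = x m := by
  simp [S, Int.fdiv_eq_ediv_of_nonneg]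

theorem zero_two_mul_add_one : S 0 x (2 * m + 1) = x m := by
  simp only [S, Int.fdiv_eq_ediv_of_nonneg _ zero_le_two]
  congr 1
  omega

theorem one_two_mul : S 1 x (2 * m) = x m := by
  rw [succ_apply, zero_two_mul, zero_two_mul_add_one, add_self_div_two]

theorem one_two_mul_add_one : S 1 x (2 * m + 1) = (x m + x (m + 1)) / 2 := by
  rw [succ_apply, zero_two_mul_add_one, show 2 * m + 1 + 1 = 2 * (m + 1) by ring, zero_two_mul]

theorem two_two_mul : S 2 x (2 * m) = (3 * x m + x (m + 1)) / 4 := by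
  rw [succ_apply, one_two_mul, one_two_mul_add_one]
  ring

theorem two_two_mul_add_one : S 2 x (2 * m + 1) = (x m + 3 * x (m + 1)) / 4 := by
  rw [succ_apply, one_two_mul_add_one, show 2 * m + 1 + 1 = 2 * (m + 1) by ring, one_two_mul]
  ring

theorem two_sq_add (α : ℝ) (K : ℤ) :
    S 2 (fun i => ((i : ℝ) + α) ^ 2) K = ((K : ℝ) / 2 + α + 1 / 4) ^ 2 + 3 / 16 := by
  obtain ⟨m, rfl | rfl⟩ := Int.even_or_odd' K
  · rw [two_two_mul]
    push_cast
    ring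
  · rw [two_two_mul_add_one]
    push_cast
    ring

theorem succ_of_eq_sq_add {p : ℕ} {c d : ℝ} (h : ∀ K : ℤ, S p x K = ((K : ℝ) / 2 + c) ^ 2 + d)
    (K : ℤ) : S (p + 1) x K = ((K : ℝ) / 2 + (c + 1 / 4)) ^ 2 + (d + 1 / 16) := by
  rw [succ_apply, h, h]
  push_cast
  ring

end S

/-- For `p ≥ 2`, every shift `α ∈ ℝ` and every `K ∈ ℤ`, applying `S_p` to the sampled
quadratic `x_i = (i + α)²` yields `(S_p x)_K = t² + (p+1)/16` at `t = K/2 + α + (p−1)/4`. -/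
theorem LaneRiesenfeld_on_quadratic (p : ℕ) (hp : 2 ≤ p) (α : ℝ) (K : ℤ) (t : ℝ)
    (ht : t = (K : ℝ) / 2 + α + ((p : ℝ) - 1) / 4) :
    S p (fun i => ((i : ℝ) + α) ^ 2) K = t ^ 2 + ((p : ℝ) + 1) / 16 := by
  subst ht
  induction p, hp using Nat.le_induction generalizing K with
  | base =>
    rw [S.two_sq_add]
    norm_num
  | succ p _ ih =>
    rw [S.succ_of_eq_sq_add _ (fun K => by rw [ih K, add_assoc])]
    push_cast
    ring
end

section
/- For every integer p ≥ 3, every real shift α, and every K ∈ ℤ, applying S_p to the sampled cubic x_i = (i + α)³ yields (S_p x)_K = t³ + (3(p+1)/16)·t, where t = K/2 + α + (p−1)/4. -/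
lemma S_succ_apply (p : ℕ) (x : ℤ → ℝ) (i : ℤ) :
    S (p + 1) x i = (S p x i + S p x (i + 1)) / 2 := rfl

lemma S_zero_apply_of_eq (x : ℤ → ℝ) {m i : ℤ} (h : i = 2 * m ∨ i = 2 * m + 1) :
    S 0 x i = x m := by
  rw [S, Int.fdiv_eq_ediv_of_nonneg _ zero_le_two]
  congr 1
  omega

lemma S_three_apply_two_mul (x : ℤ → ℝ) (m : ℤ) :
    S 3 x (2 * m) = (x m + x (m + 1)) / 2 := by
  simp only [S_succ_apply]
  rw [S_zero_apply_of_eq x (m := m) (by omega), S_zero_apply_of_eq x (m := m) (by omega),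
    S_zero_apply_of_eq x (m := m + 1) (by omega), S_zero_apply_of_eq x (m := m + 1) (by omega)]
  ring

lemma S_three_apply_two_mul_add_one (x : ℤ → ℝ) (m : ℤ) :
    S 3 x (2 * m + 1) = (x m + 6 * x (m + 1) + x (m + 2)) / 8 := by
  simp only [S_succ_apply]
  rw [S_zero_apply_of_eq x (m := m) (by omega), S_zero_apply_of_eq x (m := m + 1) (by omega),
    S_zero_apply_of_eq x (m := m + 1) (by omega), S_zero_apply_of_eq x (m := m + 2) (by omega)]
  ring

lemma S_three_cubic (α : ℝ) (K : ℤ) :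
    S 3 (fun i => ((i : ℝ) + α) ^ 3) K =
      ((K : ℝ) / 2 + α + 1 / 2) ^ 3 + 3 / 4 * ((K : ℝ) / 2 + α + 1 / 2) := by
  obtain ⟨m, rfl | rfl⟩ := Int.even_or_odd' K
  · rw [S_three_apply_two_mul]
    push_cast
    ring
  · rw [S_three_apply_two_mul_add_one]
    push_cast
    ring

/-- For `p ≥ 3`, every shift `α ∈ ℝ` and every `K ∈ ℤ`, applying `S_p` to the sampled
cubic `x_i = (i + α)³` yields `(S_p x)_K = t³ + (3(p+1)/16)·t` at `t = K/2 + α + (p−1)/4`. -/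
theorem LaneRiesenfeld_on_cubic (p : ℕ) (hp : 3 ≤ p) (α : ℝ) (K : ℤ) (t : ℝ)
    (ht : t = (K : ℝ) / 2 + α + ((p : ℝ) - 1) / 4) :
    S p (fun i => ((i : ℝ) + α) ^ 3) K = t ^ 3 + 3 * ((p : ℝ) + 1) / 16 * t := by
  subst ht
  induction p, hp using Nat.le_induction generalizing K with
  | base =>
    rw [S_three_cubic]
    norm_num
  | succ p _ ih =>
    rw [S_succ_apply, ih K, ih (K + 1)]
    push_cast
    ring
end

section
/- Let p, n be integers with 0 ≤ n ≤ p. Then there exists a polynomial r with deg r ≤ n − 8 (r = 0 if n < 8) satisfying r(−t) = (−1)^n r(t), such that for every K ∈ ℤ, applying S_p to the sampled monomial x_i = i^n yields (S_p x)_K = t^n + A₂·t^{n−2} + A₄·t^{n−4} + A₆·t^{n−6} + r(t) evaluated at t = K/2 + (p−1)/4, where A₂ = C(n,2)·(p+1)/4², A₄ = C(n,4)·(3p+1)(p+1)/4⁴, A₆ = C(n,6)·(15p²+1)(p+1)/4⁶ (here C(n,k) is the binomial coefficient, and a term A_{2k}·t^{n−2k} is omitted when 2k > n; its coefficient C(n,2k)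 vanishes in that case). -/
open Finset Polynomial fwdDiff

theorem S_apply_eq_sum (p : ℕ) (x : ℤ → ℝ) (K : ℤ) :
    S p x K = (∑ j ∈ range (p + 1), (p.choose j : ℝ) * x ((K + j).fdiv 2)) / 2 ^ p := by
  induction p generalizing K with
  | zero => simp [S]
  | succ p ih =>
    rw [S, ih, ih, sum_choose_succ_mul (fun j _ => x ((K + j).fdiv 2)) p]
    simp only [Nat.cast_succ, add_right_comm K 1, add_assoc K]
    ring

theorem comp_fdiv_two_eq (g : ℝ → ℝ) (a : ℤ) :
    g (a.fdiv 2) = (g (a / 2) + g ((a - 1) / 2)) / 2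
      + (-1) ^ a * ((g (a / 2) - g ((a - 1) / 2)) / 2) := by
  obtain ⟨b, rfl | rfl⟩ := Int.even_or_odd' a
  · have hfloor : (2 * b).fdiv 2 = b := by simp [Int.fdiv_eq_ediv_of_nonneg]
    have hhalf : ((2 * b : ℤ) : ℝ) / 2 = b := by push_cast; ring
    rw [hfloor, hhalf, (even_two_mul b).neg_one_zpow]
    ring
  · have hfloor : (2 * b + 1).fdiv 2 = b := by
      rw [Int.fdiv_eq_ediv_of_nonneg _ (by norm_num)]; omega
    have hhalf : (((2 * b + 1 : ℤ) : ℝ) - 1) / 2 = b := by push_cast; ring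
    rw [hfloor, hhalf, (odd_two_mul_add_one b).neg_one_zpow]
    ring

theorem sum_choose_mul_neg_one_pow_eq_zero {R : Type*} [CommRing R] {f : R → R} {p : ℕ}
    (hf : (Δ_[1])^[p] f = 0) (a : R) :
    ∑ j ∈ range (p + 1), (p.choose j : R) * ((-1) ^ j * f (a + j)) = 0 := by
  have hsum := fwdDiff_iter_eq_sum_shift (1 : R) f p a
  rw [hf, Pi.zero_apply] at hsum
  calc ∑ j ∈ range (p + 1), (p.choose j : R) * ((-1) ^ j * f (a + j))
      = (-1) ^ p * ∑ j ∈ range (p + 1), ((-1 : ℤ) ^ (p - j) * p.choose j) • f (a + j • 1) := by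
        rw [mul_sum]
        refine sum_congr rfl fun j hj => ?_
        have hsign : (-1 : R) ^ j = (-1) ^ p * (-1) ^ (p - j) := by
          rw [← pow_add, show p + (p - j) = j + 2 * (p - j) by grind, pow_add, pow_mul]
          simp
        rw [hsign, zsmul_eq_mul, nsmul_one]
        push_cast
        ring
    _ = 0 := by rw [← hsum, mul_zero]

theorem fwdDiff_iter_eq_zero_of_le {R : Type*} [CommRing R] {f : R → R} {m p : ℕ}
    (hf : (Δ_[1])^[m] f = 0) (hmp : m ≤ p) : (Δ_[1])^[p] f = 0 := by
  obtain ⟨k, rfl⟩ := Nat.exists_eq_add_of_le hmp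
  rw [add_comm, Function.iterate_add_apply, hf]
  exact Function.iterate_fixed (by ext; simp [fwdDiff]) k

theorem fwdDiff_iter_mul_pow_sub_add_pow_eq_zero {R : Type*} [CommRing R] (a c : R) (n : ℕ) :
    (Δ_[1])^[n] (fun v : R => (a * v) ^ n - (a * v + c) ^ n) = 0 := by
  convert fwdDiff_iter_sum_mul_pow_eq_zero (fun k => -(a ^ k * c ^ (n - k) * n.choose k)) using 2
  funext v
  rw [add_pow, sum_range_succ, Nat.choose_self, Nat.sub_self, pow_zero, Nat.cast_one, mul_one,
    mul_one, sub_add_cancel_right, ← sum_neg_distrib]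
  refine sum_congr rfl fun k _ => ?_
  ring

theorem S_pow_eq_sum (p n : ℕ) (hn : n ≤ p) (K : ℤ) :
    S p (fun i => (i : ℝ) ^ n) K
      = (∑ j ∈ range (p + 2), ((p + 1).choose j : ℝ) * ((K - 1 + j) / 2) ^ n) / 2 ^ (p + 1) := by
  set D : ℝ → ℝ := fun v => (2⁻¹ * v) ^ n - (2⁻¹ * v + -2⁻¹) ^ n
  have hD : (Δ_[1])^[p] D = 0 :=
    fwdDiff_iter_eq_zero_of_le (fwdDiff_iter_mul_pow_sub_add_pow_eq_zero _ _ n) hn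
  have hsplit : ∀ j : ℕ, (p.choose j : ℝ) * (((K + j).fdiv 2 : ℤ) : ℝ) ^ n
      = (p.choose j : ℝ) * ((((K : ℝ) - 1 + j) / 2) ^ n + ((K - 1 + (j + 1 : ℕ)) / 2) ^ n) / 2
        + (-1) ^ K / 2 * ((p.choose j : ℝ) * ((-1) ^ j * D (K + j))) := by
    intro j
    rw [comp_fdiv_two_eq (· ^ n) (K + j), zpow_add₀ (by norm_num), zpow_natCast]
    simp only [D]
    push_cast
    ring
  rw [S_apply_eq_sum, sum_congr rfl fun j _ => hsplit j, sum_add_distrib, ← mul_sum,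
    sum_choose_mul_neg_one_pow_eq_zero hD, mul_zero, add_zero,
    sum_choose_succ_mul (R := ℝ) (fun j _ => (((K : ℝ) - 1 + j) / 2) ^ n) p, ← sum_add_distrib]
  simp only [sum_div, pow_succ, ← div_div]
  refine sum_congr rfl fun j _ => ?_
  ring

/-- `∑_{ε ∈ {±1}^m} (ε₁ + ⋯ + εₘ)^k`, grouped by the number `j` of signs `+1`. -/
noncomputable def signMoment (m k : ℕ) : ℝ :=
  ∑ j ∈ range (m + 1), (m.choose j : ℝ) * (2 * j - m) ^ k

theorem signMoment_succ (m k : ℕ) :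
    signMoment (m + 1) k
      = ∑ i ∈ range (k + 1), (k.choose i : ℝ) * (1 + (-1) ^ (k - i)) * signMoment m i := by
  simp only [signMoment, mul_sum]
  rw [sum_comm, sum_choose_succ_mul (R := ℝ) (fun j _ => (2 * (j : ℝ) - (m + 1 : ℕ)) ^ k) m,
    ← sum_add_distrib]
  refine sum_congr rfl fun j _ => ?_
  have hlow : 2 * (j : ℝ) - (m + 1 : ℕ) = (2 * j - m) + (-1) := by push_cast; ring
  have hhigh : 2 * ((j + 1 : ℕ) : ℝ) - (m + 1 : ℕ) = (2 * j - m) + 1 := by push_cast; ring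
  rw [hlow, hhigh, add_pow, add_pow, mul_sum, mul_sum, ← sum_add_distrib]
  refine sum_congr rfl fun i _ => ?_
  ring

theorem signMoment_of_odd (m : ℕ) {k : ℕ} (hk : Odd k) : signMoment m k = 0 := by
  induction m generalizing k with
  | zero => simp [signMoment, hk.pos.ne']
  | succ m ih =>
    rw [signMoment_succ]
    refine sum_eq_zero fun i hi => ?_
    rcases Nat.even_or_odd i with hi' | hi'
    · rw [(Nat.Odd.sub_even (by grind) hk hi').neg_one_pow]
      ring
    · rw [ih hi', mul_zero]

theorem signMoment_zero (m : ℕ) : signMoment m 0 = 2 ^ m := by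
  simp only [signMoment, pow_zero, mul_one]
  exact_mod_cast Nat.sum_range_choose m

theorem signMoment_two (m : ℕ) : signMoment m 2 = m * 2 ^ m := by
  induction m with
  | zero => simp [signMoment]
  | succ m ih =>
    have hrec : signMoment (m + 1) 2 = 2 * signMoment m 0 + 2 * signMoment m 2 := by
      norm_num [signMoment_succ, sum_range_succ]
    rw [hrec, ih, signMoment_zero]
    push_cast
    ring

theorem signMoment_four (m : ℕ) : signMoment m 4 = (3 * m ^ 2 - 2 * m) * 2 ^ m := by
  induction m with
  | zero => simp [signMoment]
  | succ m ih =>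
    have hrec : signMoment (m + 1) 4
        = 2 * signMoment m 0 + 12 * signMoment m 2 + 2 * signMoment m 4 := by
      norm_num [signMoment_succ, sum_range_succ, Nat.choose]
    rw [hrec, ih, signMoment_two, signMoment_zero]
    push_cast
    ring

theorem signMoment_six (m : ℕ) :
    signMoment m 6 = (15 * m ^ 3 - 30 * m ^ 2 + 16 * m) * 2 ^ m := by
  induction m with
  | zero => simp [signMoment]
  | succ m ih =>
    have hrec : signMoment (m + 1) 6 = 2 * signMoment m 0 + 30 * signMoment m 2
        + 30 * signMoment m 4 + 2 * signMoment m 6 := by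
      norm_num [signMoment_succ, sum_range_succ, Nat.choose]
    rw [hrec, ih, signMoment_four, signMoment_two, signMoment_zero]
    push_cast
    ring

theorem sum_choose_mul_add_pow_eq (m n : ℕ) (t : ℝ) :
    ∑ j ∈ range (m + 1), (m.choose j : ℝ) * (t + (2 * j - m) / 4) ^ n
      = ∑ k ∈ range (n + 1), n.choose k * (signMoment m k / 4 ^ k) * t ^ (n - k) := by
  simp only [add_comm t, add_pow, mul_sum, signMoment, sum_div, sum_mul]
  rw [sum_comm]
  refine sum_congr rfl fun k _ => sum_congr rfl fun j _ => ?_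
  rw [div_pow]
  ring

/-- The `k`-th moment of `(B - (p + 1) / 2) / 2` for `B ∼ Bin(p + 1, 1/2)`. -/
noncomputable def splineMoment (p k : ℕ) : ℝ := signMoment (p + 1) k / (4 ^ k * 2 ^ (p + 1))

theorem splineMoment_of_odd (p : ℕ) {k : ℕ} (hk : Odd k) : splineMoment p k = 0 := by
  rw [splineMoment, signMoment_of_odd _ hk, zero_div]

theorem splineMoment_zero (p : ℕ) : splineMoment p 0 = 1 := by
  simp [splineMoment, signMoment_zero]

theorem splineMoment_two (p : ℕ) : splineMoment p 2 = ((p : ℝ) + 1) / 4 ^ 2 := by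
  simp only [splineMoment, signMoment_two]
  push_cast
  field_simp

theorem splineMoment_four (p : ℕ) :
    splineMoment p 4 = (3 * (p : ℝ) + 1) * ((p : ℝ) + 1) / 4 ^ 4 := by
  simp only [splineMoment, signMoment_four]
  push_cast
  field_simp
  ring

theorem splineMoment_six (p : ℕ) :
    splineMoment p 6 = (15 * (p : ℝ) ^ 2 + 1) * ((p : ℝ) + 1) / 4 ^ 6 := by
  simp only [splineMoment, signMoment_six]
  push_cast
  field_simp
  ring

theorem S_pow_eq_sum_splineMoment (p n : ℕ) (hn : n ≤ p) (K : ℤ) :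
    S p (fun i => (i : ℝ) ^ n) K
      = ∑ k ∈ range (n + 1),
          n.choose k * splineMoment p k * ((K : ℝ) / 2 + ((p : ℝ) - 1) / 4) ^ (n - k) := by
  have hshift : ∀ j : ℕ, ((K : ℝ) - 1 + j) / 2
      = (K / 2 + ((p : ℝ) - 1) / 4) + (2 * j - (p + 1 : ℕ)) / 4 := fun j => by push_cast; ring
  simp only [S_pow_eq_sum p n hn, hshift, sum_choose_mul_add_pow_eq, sum_div, splineMoment]
  refine sum_congr rfl fun k _ => ?_
  field_simp

noncomputable def expansionTail (c : ℕ → ℝ) (n N : ℕ) : ℝ[X] :=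
  ∑ k ∈ Ico N (n + 1), C (c k) * X ^ (n - k)

theorem expansionTail_eq_zero (c : ℕ → ℝ) {n N : ℕ} (h : n < N) : expansionTail c n N = 0 := by
  rw [expansionTail, Ico_eq_empty_of_le h, sum_empty]

theorem natDegree_expansionTail_le (c : ℕ → ℝ) (n N : ℕ) :
    (expansionTail c n N).natDegree ≤ n - N :=
  natDegree_sum_le_of_forall_le _ _ fun k hk =>
    (natDegree_C_mul_X_pow_le _ _).trans (by grind)

theorem eval_expansionTail (c : ℕ → ℝ) (n N : ℕ) (t : ℝ) :
    (expansionTail c n N).eval t = ∑ k ∈ Ico N (n + 1), c k * t ^ (n - k) := by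
  simp [expansionTail, eval_finsetSum]

theorem eval_neg_expansionTail {c : ℕ → ℝ} (hc : ∀ k, Odd k → c k = 0) (n N : ℕ) (t : ℝ) :
    (expansionTail c n N).eval (-t) = (-1) ^ n * (expansionTail c n N).eval t := by
  rw [eval_expansionTail, eval_expansionTail, mul_sum]
  refine sum_congr rfl fun k hk => ?_
  rcases Nat.even_or_odd k with hk' | hk'
  · have hkn : n = (n - k) + k := by grind
    rw [neg_pow, hkn, pow_add _ (n - k), hk'.neg_one_pow, ← hkn]
    ring
  · rw [hc k hk', zero_mul, zero_mul, mul_zero]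

theorem sum_range_succ_eq_sum_range_add_sum_Ico {M : Type*} [AddCommMonoid M] {f : ℕ → M} {n : ℕ}
    (hf : ∀ k, n < k → f k = 0) (N : ℕ) :
    ∑ k ∈ range (n + 1), f k = ∑ k ∈ range N, f k + ∑ k ∈ Ico N (n + 1), f k := by
  rcases le_or_gt N (n + 1) with h | h
  · exact (sum_range_add_sum_Ico f h).symm
  · rw [Ico_eq_empty_of_le h.le, sum_empty, add_zero]
    exact sum_subset (range_subset_range.2 h.le) fun k hk hk' => hf k (by grind)

/-- For `0 ≤ n ≤ p`, applying `S_p` to the sampled monomial `x_i = i^n` yields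
`(S_p x)_K = tⁿ + A₂·t^{n−2} + A₄·t^{n−4} + A₆·t^{n−6} + r(t)` at `t = K/2 + (p−1)/4`,
where `A₂ = C(n,2)(p+1)/4²`, `A₄ = C(n,4)(3p+1)(p+1)/4⁴`, `A₆ = C(n,6)(15p²+1)(p+1)/4⁶`,
and `r` is a polynomial with `deg r ≤ n − 8` (`r = 0` if `n < 8`) satisfying
`r(−t) = (−1)ⁿ r(t)`. (Terms with `2k > n` vanish since then `C(n,2k) = 0`.) -/
theorem LaneRiesenfeld_on_monomial (p n : ℕ) (hn : n ≤ p) :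
    ∃ r : Polynomial ℝ,
      (r = 0 ∨ r.natDegree + 8 ≤ n) ∧
      (∀ t : ℝ, r.eval (-t) = (-1 : ℝ) ^ n * r.eval t) ∧
      ∀ (K : ℤ) (t : ℝ), t = (K : ℝ) / 2 + ((p : ℝ) - 1) / 4 →
        S p (fun i => (i : ℝ) ^ n) K =
          t ^ n
          + (n.choose 2 : ℝ) * ((p : ℝ) + 1) / 4 ^ 2 * t ^ (n - 2)
          + (n.choose 4 : ℝ) * ((3 * (p : ℝ) + 1) * ((p : ℝ) + 1)) / 4 ^ 4 * t ^ (n - 4)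
          + (n.choose 6 : ℝ) * ((15 * (p : ℝ) ^ 2 + 1) * ((p : ℝ) + 1)) / 4 ^ 6 * t ^ (n - 6)
          + r.eval t := by
  refine ⟨expansionTail (fun k => n.choose k * splineMoment p k) n 8, ?_,
    fun t => eval_neg_expansionTail (fun k hk => by rw [splineMoment_of_odd p hk, mul_zero]) n 8 t,
    ?_⟩
  · rcases lt_or_ge n 8 with h | h
    · exact Or.inl (expansionTail_eq_zero _ h)
    · have hdeg := natDegree_expansionTail_le (fun k => n.choose k * splineMoment p k) n 8
      exact Or.inr (by omega)
  · rintro K t rfl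
    rw [S_pow_eq_sum_splineMoment p n hn K, eval_expansionTail,
      sum_range_succ_eq_sum_range_add_sum_Ico (fun k hk => by simp [Nat.choose_eq_zero_of_lt hk]) 8]
    simp only [sum_range_succ, sum_range_zero, splineMoment_zero, splineMoment_two,
      splineMoment_four, splineMoment_six, splineMoment_of_odd p (by decide : Odd 1),
      splineMoment_of_odd p (by decide : Odd 3), splineMoment_of_odd p (by decide : Odd 5),
      splineMoment_of_odd p (by decide : Odd 7), Nat.choose_zero_right, Nat.cast_one, Nat.sub_zero]
    ring
end

section
/- Let p ≥ 1 be an integer. For every polynomial 𝔭 ∈ ℝ[t] with deg 𝔭 ≤ p there exists a polynomial 𝔮 ∈ ℝ[t] with deg 𝔮 < deg 𝔭 (𝔮 = 0 if deg 𝔭 = 0) such that for all i ∈ ℤ, applying S_p to the sequence (𝔭(k))_{k∈ℤ} yields (S_p(𝔭|_ℤ))_i = 𝔭(i/2) + 𝔮(i/2). In particular, the order of polynomial reproduction of S_p is p + 1. -/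
/-!
At every stage, `S p (q|_ℤ)` has the form `i ↦ a (i/2) + [i odd] b (i/2)` for polynomials
`a`, `b`. For `S 0` take `a = q` and `b = q(· - 1/2) - q`; averaging neighbours replaces
`(a, b)` by `((a + τa + τb)/2, (b - τb)/2)`, where `τ` is the shift by `1/2`. Since `τr - r`
has smaller degree than `r`, `a` stays `q` up to lower order terms, while the degree of `b`
starts below `deg q` and drops with every step, so `b = 0` once `p ≥ deg q`.
-/

open Polynomial

theorem Polynomial.taylor_sub_self_mem_degreeLT {R : Type*} [CommRing R] (c : R) {n : ℕ}
    {r : R[X]} (hr : r ∈ R[X]_(n + 1)) : taylor c r - r ∈ R[X]_n := by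
  rw [degreeLT_succ_eq_degreeLE, mem_degreeLE, ← natDegree_le_iff_degree_le] at hr
  rw [mem_degreeLT, degree_lt_iff_coeff_zero]
  intro m hm
  rcases (hr.trans hm).eq_or_lt with rfl | hlt
  · rw [coeff_sub, coeff_taylor_natDegree, leadingCoeff, sub_self]
  · rw [coeff_sub, coeff_eq_zero_of_natDegree_lt hlt,
      coeff_eq_zero_of_natDegree_lt ((natDegree_taylor r c).trans_lt hlt), sub_self]

noncomputable def parityEval (a b : ℝ[X]) (i : ℤ) : ℝ :=
  a.eval ((i : ℝ) / 2) + if Odd i then b.eval ((i : ℝ) / 2) else 0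

theorem S_zero_eq_parityEval (q : ℝ[X]) :
    S 0 (fun k => q.eval (k : ℝ)) = parityEval q (taylor (-2⁻¹) q - q) := by
  funext i
  rcases Int.even_or_odd' i with ⟨m, rfl | rfl⟩
  · have hm : (2 * m).fdiv 2 = m := by simp
    simp [S, parityEval, hm]
  · have hm : (2 * m + 1).fdiv 2 = m := by simp [Int.fdiv_eq_ediv_of_nonneg]; omega
    have harg : ((2 * m + 1 : ℤ) : ℝ) / 2 + -2⁻¹ = m := by push_cast; ring
    simp only [S, parityEval, hm, if_pos (odd_two_mul_add_one m), taylor_eval, eval_sub, harg,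
      add_sub_cancel]

theorem parityEval_average (a b : ℝ[X]) (i : ℤ) :
    (parityEval a b i + parityEval a b (i + 1)) / 2 =
      parityEval ((2⁻¹ : ℝ) • (a + taylor 2⁻¹ a + taylor 2⁻¹ b))
        ((2⁻¹ : ℝ) • (b - taylor 2⁻¹ b)) i := by
  have hshift : ((i + 1 : ℤ) : ℝ) / 2 = (i : ℝ) / 2 + 2⁻¹ := by push_cast; ring
  rcases Int.even_or_odd i with hi | hi
  · simp only [parityEval, hshift, odd_add_one, hi, ← Int.not_even_iff_odd, not_true, if_true,
      if_false, eval_smul, eval_add, eval_sub, taylor_eval, smul_eq_mul]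
    ring
  · simp only [parityEval, hshift, odd_add_one, hi, ← Int.not_odd_iff_even, not_true, if_true,
      if_false, eval_smul, eval_add, eval_sub, taylor_eval, smul_eq_mul]
    ring

/-- `n - p` is truncated subtraction, so `b = 0` as soon as `p ≥ n`. -/
theorem S_eq_parityEval (q : ℝ[X]) {n : ℕ} (hq : q ∈ ℝ[X]_(n + 1)) (p : ℕ) :
    ∃ a b : ℝ[X], a - q ∈ ℝ[X]_n ∧ b ∈ ℝ[X]_(n - p) ∧
      S p (fun k => q.eval (k : ℝ)) = parityEval a b := by
  induction p with
  | zero => exact ⟨q, _, by simp, taylor_sub_self_mem_degreeLT _ hq, S_zero_eq_parityEval q⟩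
  | succ p ih =>
    obtain ⟨a, b, ha, hb, hS⟩ := ih
    have ha' : a ∈ ℝ[X]_(n + 1) := by
      simpa using add_mem (degreeLT_mono n.le_succ ha) hq
    have hb' : b ∈ ℝ[X]_n := degreeLT_mono (n.sub_le p) hb
    refine ⟨(2⁻¹ : ℝ) • (a + taylor 2⁻¹ a + taylor 2⁻¹ b), (2⁻¹ : ℝ) • (b - taylor 2⁻¹ b),
      ?_, ?_, funext fun i => ?_⟩
    · have h : (2⁻¹ : ℝ) • (a + taylor 2⁻¹ a + taylor 2⁻¹ b) - q =
          (2⁻¹ : ℝ) • ((a - q) + (a - q) + (taylor 2⁻¹ a - a) + taylor 2⁻¹ b) := by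
        module
      rw [h]
      exact Submodule.smul_mem _ _ (add_mem (add_mem (add_mem ha ha)
        (taylor_sub_self_mem_degreeLT _ ha')) (taylor_mem_degreeLT.2 hb'))
    · exact Submodule.smul_mem _ _ (sub_mem_comm_iff.1
        (taylor_sub_self_mem_degreeLT _ (degreeLT_mono (by omega) hb)))
    · rw [S, hS]
      exact parityEval_average a b i

theorem LaneRiesenfeld_polynomial_reproduction_general (p : ℕ)
    (𝔭 : Polynomial ℝ) (hdeg : 𝔭.degree ≤ (p : WithBot ℕ)) :
    ∃ 𝔮 : Polynomial ℝ, (𝔮 = 0 ∨ 𝔮.degree < 𝔭.degree) ∧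
      ∀ i : ℤ, S p (fun k => 𝔭.eval (k : ℝ)) i = 𝔭.eval ((i : ℝ) / 2) + 𝔮.eval ((i : ℝ) / 2) := by
  have h𝔭 : 𝔭 ∈ ℝ[X]_(𝔭.natDegree + 1) := by
    rw [degreeLT_succ_eq_degreeLE]
    exact mem_degreeLE.2 degree_le_natDegree
  obtain ⟨a, b, ha, hb, hS⟩ := S_eq_parityEval 𝔭 h𝔭 p
  have hb0 : b = 0 := by
    rw [Nat.sub_eq_zero_of_le (natDegree_le_iff_degree_le.2 hdeg)] at hb
    simpa [mem_degreeLT] using hb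
  refine ⟨a - 𝔭, ?_, fun i => ?_⟩
  · rcases eq_or_ne 𝔭 0 with rfl | h0
    · simpa [mem_degreeLT] using ha
    · exact Or.inr (by rwa [degree_eq_natDegree h0, ← mem_degreeLT])
  · simp [hS, parityEval, hb0]

/-- For `p ≥ 1`, the order of polynomial reproduction of `S_p` is `p + 1`: for every
polynomial `𝔭` of degree `≤ p` there is a polynomial `𝔮` with `deg 𝔮 < deg 𝔭`
(`𝔮 = 0` if `deg 𝔭 = 0`) such that `S_p(𝔭|_ℤ) = 𝔭|_{2⁻¹ℤ} + 𝔮|_{2⁻¹ℤ}`. -/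
theorem LaneRiesenfeld_polynomial_reproduction (p : ℕ) (hp : 1 ≤ p)
    (𝔭 : Polynomial ℝ) (hdeg : 𝔭.degree ≤ (p : WithBot ℕ)) :
    ∃ 𝔮 : Polynomial ℝ, (𝔮 = 0 ∨ 𝔮.degree < 𝔭.degree) ∧
      ∀ i : ℤ, S p (fun k => 𝔭.eval (k : ℝ)) i = 𝔭.eval ((i : ℝ) / 2) + 𝔮.eval ((i : ℝ) / 2) :=
  LaneRiesenfeld_polynomial_reproduction_general p 𝔭 hdeg
end

section
/- Let (a_j)_{j≥0} be a sequence of strictly positive real numbers and C, K ≥ 0 constants such that a_{j+1} ≥ (1/2 − C·a_j²)·a_j for all j ≥ 0 and a_j ≤ K·2^{−j} for all j ≥ 0. Then there exists a constant c > 0 such that a_j ≥ c·2^{−j} for all j ≥ 0. -/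
/-! Put `b j = 2^j a_j`. The recursion becomes `b (j+1) ≥ (1 - ε j) b j` with `ε j = 2 C a_j²`,
which is summable because `a_j ≤ K 2^{-j}`. Once the tail `∑_{i ≥ N} ε i` is at most `1/2`,
the product inequality `∏ (1 - ε i) ≥ 1 - ∑ ε i` keeps `b` above `b N / 2` from `N` on,
and a finite minimum handles `j ≤ N`. -/

open Finset

theorem mul_one_sub_sum_le_of_one_sub_mul_le {b ε : ℕ → ℝ} (hb : 0 ≤ b 0)
    (hε₀ : ∀ i, 0 ≤ ε i) (hε₁ : ∀ i, ε i ≤ 1)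
    (hstep : ∀ i, (1 - ε i) * b i ≤ b (i + 1)) (m : ℕ) :
    b 0 * (1 - ∑ i ∈ range m, ε i) ≤ b m := by
  induction m with
  | zero => simp
  | succ m ih =>
    have hS : 0 ≤ ∑ i ∈ range m, ε i := sum_nonneg fun i _ => hε₀ i
    calc b 0 * (1 - ∑ i ∈ range (m + 1), ε i)
        = (1 - ε m) * (b 0 * (1 - ∑ i ∈ range m, ε i)) - b 0 * ε m * ∑ i ∈ range m, ε i := by
          rw [sum_range_succ]; ring
      _ ≤ (1 - ε m) * (b 0 * (1 - ∑ i ∈ range m, ε i)) :=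
          sub_le_self _ (mul_nonneg (mul_nonneg hb (hε₀ m)) hS)
      _ ≤ (1 - ε m) * b m := mul_le_mul_of_nonneg_left ih (sub_nonneg.2 (hε₁ m))
      _ ≤ b (m + 1) := hstep m

theorem exists_pos_le_of_summable_of_one_sub_mul_le {b ε : ℕ → ℝ} (hb : ∀ j, 0 < b j)
    (hε : Summable ε) (hstep : ∀ j, (1 - ε j) * b j ≤ b (j + 1)) :
    ∃ c, 0 < c ∧ ∀ j, c ≤ b j := by
  -- Summability on `ℝ` is absolute, so the positive part of `ε` is summable and still works.
  set ε' : ℕ → ℝ := fun i => max (ε i) 0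
  have hε'₀ : ∀ i, 0 ≤ ε' i := fun i => le_max_right _ _
  have hε' : Summable ε' :=
    hε.abs.of_nonneg_of_le hε'₀ fun i => max_le (le_abs_self _) (abs_nonneg _)
  have hstep' : ∀ j, (1 - ε' j) * b j ≤ b (j + 1) := fun j =>
    le_trans (mul_le_mul_of_nonneg_right (sub_le_sub_left (le_max_left _ _) 1) (hb j).le)
      (hstep j)
  obtain ⟨N, hN⟩ : ∃ N, ∑' i, ε' (i + N) ≤ 1 / 2 :=
    ((tendsto_sum_nat_add ε').eventually (ge_mem_nhds (by norm_num))).exists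
  have htail_summable : Summable fun i => ε' (i + N) := (summable_nat_add_iff N).2 hε'
  have htail : ∀ m, b N / 2 ≤ b (m + N) := by
    intro m
    have hsum : ∑ i ∈ range m, ε' (i + N) ≤ 1 / 2 :=
      (htail_summable.sum_le_tsum _ fun i _ => hε'₀ _).trans hN
    have hle := mul_one_sub_sum_le_of_one_sub_mul_le (b := fun i => b (i + N))
      (ε := fun i => ε' (i + N)) (by simpa using (hb N).le) (fun i => hε'₀ _)
      (fun i => ((htail_summable.le_tsum i fun j _ => hε'₀ _).trans hN).trans (by norm_num))
      (fun i => by simpa [add_right_comm] using hstep' (i + N)) m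
    simp only [zero_add] at hle
    nlinarith [hb N]
  have hne : (range (N + 1)).Nonempty := ⟨0, by simp⟩
  have hinf : 0 < (range (N + 1)).inf' hne b := (lt_inf'_iff hne).2 fun i _ => hb i
  refine ⟨(range (N + 1)).inf' hne b / 2, half_pos hinf, fun j => ?_⟩
  rcases le_or_gt j N with hj | hj
  · have := inf'_le b (mem_range_succ_iff.2 hj)
    linarith
  · obtain ⟨m, rfl⟩ := Nat.exists_eq_add_of_le' hj.le
    have := inf'_le b (self_mem_range_succ N)
    linarith [htail m]

theorem geometric_lower_bound_general (a : ℕ → ℝ) (C K : ℝ)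
    (ha : ∀ j, 0 < a j)
    (hrec : ∀ j, (1 / 2 - C * a j ^ 2) * a j ≤ a (j + 1))
    (hup : ∀ j, a j ≤ K * (1 / 2 : ℝ) ^ j) :
    ∃ c : ℝ, 0 < c ∧ ∀ j, c * (1 / 2 : ℝ) ^ j ≤ a j := by
  have hsq : ∀ j, a j ^ 2 ≤ K ^ 2 * (1 / 4 : ℝ) ^ j := fun j => by
    calc a j ^ 2 ≤ (K * (1 / 2 : ℝ) ^ j) ^ 2 := pow_le_pow_left₀ (ha j).le (hup j) 2
      _ = K ^ 2 * (1 / 4 : ℝ) ^ j := by rw [mul_pow, ← pow_mul, mul_comm j, pow_mul]; norm_num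
  have hsummable : Summable fun j => 2 * C * a j ^ 2 := by
    refine ((summable_geometric_of_lt_one (by norm_num) (by norm_num : (1 / 4 : ℝ) < 1)).mul_left
      (2 * |C| * K ^ 2)).of_norm_bounded fun j => ?_
    rw [Real.norm_eq_abs, abs_mul, abs_mul, abs_sq, abs_two]
    nlinarith [mul_le_mul_of_nonneg_left (hsq j) (by positivity : (0 : ℝ) ≤ 2 * |C|)]
  have hstep : ∀ j, (1 - 2 * C * a j ^ 2) * (2 ^ j * a j) ≤ 2 ^ (j + 1) * a (j + 1) := fun j => by
    calc (1 - 2 * C * a j ^ 2) * (2 ^ j * a j) = 2 ^ (j + 1) * ((1 / 2 - C * a j ^ 2) * a j) := by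
          ring
      _ ≤ 2 ^ (j + 1) * a (j + 1) := mul_le_mul_of_nonneg_left (hrec j) (by positivity)
  obtain ⟨c, hc, hcb⟩ := exists_pos_le_of_summable_of_one_sub_mul_le
    (fun j => mul_pos (pow_pos two_pos j) (ha j)) hsummable hstep
  refine ⟨c, hc, fun j => ?_⟩
  calc c * (1 / 2 : ℝ) ^ j ≤ (2 ^ j * a j) * (1 / 2 : ℝ) ^ j := by gcongr; exact hcb j
    _ = a j := by rw [mul_right_comm, ← mul_pow]; norm_num

/-- Reverse estimate: if the positive sequence `a_j` satisfies
`a_{j+1} ≥ (1/2 − C·a_j²)·a_j` and `a_j ≤ K·2^{−j}`, then `a_j ≥ c·2^{−j}` for some `c > 0`. -/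
theorem geometric_lower_bound (a : ℕ → ℝ) (C K : ℝ)
    (ha : ∀ j, 0 < a j) (hC : 0 ≤ C) (hK : 0 ≤ K)
    (hrec : ∀ j, (1 / 2 - C * a j ^ 2) * a j ≤ a (j + 1))
    (hup : ∀ j, a j ≤ K * (1 / 2 : ℝ) ^ j) :
    ∃ c : ℝ, 0 < c ∧ ∀ j, c * (1 / 2 : ℝ) ^ j ≤ a j :=
  geometric_lower_bound_general a C K ha hrec hup
end

section
/- Let v be a simple L-periodic arc-length curve of class C² whose signed curvature satisfies k(s) ≥ c_k for all s, for some constant c_k > 0 (a strictly convex closed curve). Then there exists a constant c > 0 such that for all s, s' ∈ ℝ: |v'(s) − v'(s')| ≥ c · min(|s − s'| mod L, L − (|s − s'| mod L)), i.e. the tangent map v' is invertible on a period and its inverse is Lipschitz continuous with respect to the periodic distance. -/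
/-- Euclidean scalar product on `ℝ²`. -/
noncomputable def dot (u w : ℝ × ℝ) : ℝ := u.1 * w.1 + u.2 * w.2

/-- Euclidean norm on `ℝ²`. -/
noncomputable def enorm2 (u : ℝ × ℝ) : ℝ := Real.sqrt (u.1 ^ 2 + u.2 ^ 2)

/-- Rotation by 90°: `u^⊥ = (−u₂, u₁)`. -/
def perp (u : ℝ × ℝ) : ℝ × ℝ := (-u.2, u.1)

/-- Signed curvature `k(s) = v''(s)·(v'(s))^⊥` of an arc-length parametrized curve. -/
noncomputable def curv (v : ℝ → ℝ × ℝ) (s : ℝ) : ℝ :=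
  dot (deriv (deriv v) s) (perp (deriv v s))

/-!
Write `v' = (cos θ, sin θ)`, where the tangent angle satisfies `θ' = k ≥ c_k`. As `v'` is
`L`-periodic, `θ (s + L) = θ s + 2πn` for an integer `n ≥ 1`, and simplicity forces `n = 1`:
reparametrized by its tangent angle, a curve turning `n ≥ 2` times either closes up after one
turn or has a parameter `t₀` at which the chord from `t₀` to `t₀ + 2π` lies on the tangent line
at `t₀` and points forward (a downward zero of `⟪chord, normal⟫`, whose values over the `n` turns
telescope to zero), and then the arc over `[t₀, t₀ + 2π]` has to cross itself. Once `n = 1`,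
the angle turned between `s'` and `s` is at least `c_k m` and at most `2π - c_k (L - m)`, where
`m` is `s - s'` reduced modulo `L`, and Jordan's inequality `sin x ≥ 2x/π` gives the bound with
`c = 2 c_k / π`.
-/

open Real Set Filter

noncomputable def unitVec (t : ℝ) : ℝ × ℝ := (cos t, sin t)

theorem dot_perp_self (u : ℝ × ℝ) : dot u (perp u) = 0 := by
  simp only [dot, perp]; ring

theorem dot_perp_comm (u w : ℝ × ℝ) : dot (perp u) w = -dot u (perp w) := by
  simp only [dot, perp]; ring

theorem dot_smul_left (c : ℝ) (u w : ℝ × ℝ) : dot (c • u) w = c * dot u w := by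
  simp only [dot, Prod.smul_fst, Prod.smul_snd, smul_eq_mul]; ring

theorem dot_smul_right (c : ℝ) (u w : ℝ × ℝ) : dot u (c • w) = c * dot u w := by
  simp only [dot, Prod.smul_fst, Prod.smul_snd, smul_eq_mul]; ring

theorem dot_unitVec_unitVec (a b : ℝ) : dot (unitVec a) (unitVec b) = cos (a - b) := by
  simp only [dot, unitVec, cos_sub]

theorem dot_unitVec_perp_unitVec (a b : ℝ) :
    dot (unitVec a) (perp (unitVec b)) = sin (a - b) := by
  simp only [dot, perp, unitVec, sin_sub]; ring

theorem dot_unitVec_self (t : ℝ) : dot (unitVec t) (unitVec t) = 1 := by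
  rw [dot_unitVec_unitVec, sub_self, cos_zero]

theorem unitVec_add_two_pi (t : ℝ) : unitVec (t + 2 * π) = unitVec t := by
  simp only [unitVec, cos_add_two_pi, sin_add_two_pi]

theorem unitVec_add_nat_mul_two_pi (t : ℝ) (n : ℕ) : unitVec (t + n * (2 * π)) = unitVec t := by
  simp only [unitVec, cos_add_nat_mul_two_pi, sin_add_nat_mul_two_pi]

theorem exists_unitVec_eq {u : ℝ × ℝ} (hu : dot u u = 1) : ∃ θ, u = unitVec θ := by
  obtain ⟨θ, hθ⟩ := (Complex.norm_eq_one_iff ⟨u.1, u.2⟩).1 <| by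
    rw [Complex.norm_def, Complex.normSq_mk, ← dot, hu, Real.sqrt_one]
  refine ⟨θ, Prod.ext ?_ ?_⟩
  · simpa [unitVec, Complex.exp_mul_I, ← Complex.ofReal_cos, ← Complex.ofReal_sin] using
      (congrArg Complex.re hθ).symm
  · simpa [unitVec, Complex.exp_mul_I, ← Complex.ofReal_cos, ← Complex.ofReal_sin] using
      (congrArg Complex.im hθ).symm

theorem exists_int_of_unitVec_eq {a b : ℝ} (h : unitVec a = unitVec b) :
    ∃ n : ℤ, a - b = n * (2 * π) := by
  obtain ⟨n, hn⟩ := Real.Angle.angle_eq_iff_two_pi_dvd_sub.1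
    (Real.Angle.cos_sin_inj (congrArg Prod.fst h) (congrArg Prod.snd h))
  exact ⟨n, by rw [hn, mul_comm]⟩

theorem eq_of_dot_self_eq_one {u w : ℝ × ℝ} (hu : dot u u = 1) (hw : dot w w = 1)
    (huw : dot u w = 1) : u = w := by
  simp only [dot] at hu hw huw
  have h₁ : u.1 = w.1 := by nlinarith [sq_nonneg (u.1 - w.1), sq_nonneg (u.2 - w.2)]
  have h₂ : u.2 = w.2 := by nlinarith [sq_nonneg (u.1 - w.1), sq_nonneg (u.2 - w.2)]
  exact Prod.ext h₁ h₂

theorem eq_of_dot_unitVec_eq {x y : ℝ × ℝ} {t : ℝ} (h : dot x (unitVec t) = dot y (unitVec t))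
    (h' : dot x (perp (unitVec t)) = dot y (perp (unitVec t))) : x = y := by
  simp only [dot, perp, unitVec] at h h'
  have := sin_sq_add_cos_sq t
  refine Prod.ext ?_ ?_
  · linear_combination cos t * h - sin t * h' - (x.1 - y.1) * this
  · linear_combination sin t * h + cos t * h' - (x.2 - y.2) * this

theorem enorm2_unitVec_sub_unitVec (a b : ℝ) :
    enorm2 (unitVec a - unitVec b) = 2 * |sin ((a - b) / 2)| := by
  have h : (unitVec a - unitVec b).1 ^ 2 + (unitVec a - unitVec b).2 ^ 2
      = (2 * sin ((a - b) / 2)) ^ 2 := by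
    have h₂ := cos_two_mul ((a - b) / 2)
    rw [show 2 * ((a - b) / 2) = a - b by ring] at h₂
    simp only [unitVec, Prod.fst_sub, Prod.snd_sub]
    linear_combination sin_sq_add_cos_sq a + sin_sq_add_cos_sq b + 2 * cos_sub a b - 2 * h₂
      - 4 * sin_sq_add_cos_sq ((a - b) / 2)
  rw [enorm2, h, sqrt_sq_eq_abs, abs_mul, abs_two]

-- Inside the namespace `HasDerivAt`, plain `dot` refers to this lemma, hence `_root_.dot`.
theorem HasDerivAt.dot {f g : ℝ → ℝ × ℝ} {f' g' : ℝ × ℝ} {x : ℝ} (hf : HasDerivAt f f' x)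
    (hg : HasDerivAt g g' x) :
    HasDerivAt (fun t => dot (f t) (g t)) (dot f' (g x) + dot (f x) g') x := by
  have hf₁ : HasDerivAt (fun t => (f t).1) f'.1 x :=
    (ContinuousLinearMap.fst ℝ ℝ ℝ).hasFDerivAt.comp_hasDerivAt x hf
  have hf₂ : HasDerivAt (fun t => (f t).2) f'.2 x :=
    (ContinuousLinearMap.snd ℝ ℝ ℝ).hasFDerivAt.comp_hasDerivAt x hf
  have hg₁ : HasDerivAt (fun t => (g t).1) g'.1 x :=
    (ContinuousLinearMap.fst ℝ ℝ ℝ).hasFDerivAt.comp_hasDerivAt x hg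
  have hg₂ : HasDerivAt (fun t => (g t).2) g'.2 x :=
    (ContinuousLinearMap.snd ℝ ℝ ℝ).hasFDerivAt.comp_hasDerivAt x hg
  refine ((hf₁.mul hg₁).add (hf₂.mul hg₂)).congr_deriv ?_
  simp only [_root_.dot]; ring

theorem HasDerivAt.dot_const {f : ℝ → ℝ × ℝ} {f' : ℝ × ℝ} {x : ℝ} (hf : HasDerivAt f f' x)
    (u : ℝ × ℝ) : HasDerivAt (fun t => _root_.dot (f t) u) (_root_.dot f' u) x := by
  simpa [_root_.dot] using hf.dot (hasDerivAt_const x u)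

theorem hasDerivAt_unitVec (t : ℝ) : HasDerivAt unitVec (perp (unitVec t)) t :=
  (hasDerivAt_cos t).prodMk (hasDerivAt_sin t)

theorem hasDerivAt_perp_unitVec (t : ℝ) :
    HasDerivAt (fun t => perp (unitVec t)) (-unitVec t) t := by
  simpa [perp, unitVec] using (hasDerivAt_sin t).neg.prodMk (hasDerivAt_cos t)

theorem Function.Periodic.deriv {E : Type*} [NormedAddCommGroup E] [NormedSpace ℝ E]
    {f : ℝ → E} {L : ℝ} (h : Function.Periodic f L) :
    Function.Periodic (deriv f) L := fun x => by
  rw [← deriv_comp_add_const, funext h]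

theorem eq_smul_perp_of_dot_self_eq_one {V V' : ℝ → ℝ × ℝ} {s : ℝ}
    (hV : ∀ s, HasDerivAt V (V' s) s) (hunit : ∀ s, dot (V s) (V s) = 1) :
    V' s = dot (V' s) (perp (V s)) • perp (V s) := by
  have hd := (hV s).dot (hV s)
  simp only [hunit] at hd
  have horth : dot (V' s) (V s) = 0 := by
    have := hd.unique (hasDerivAt_const s 1)
    simp only [dot] at this ⊢; linarith
  have h1 := hunit s
  simp only [dot] at h1 horth
  refine Prod.ext ?_ ?_ <;> simp only [dot, perp, Prod.smul_fst, Prod.smul_snd, smul_eq_mul]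
  · linear_combination (V s).1 * horth - (V' s).1 * h1
  · linear_combination (V s).2 * horth - (V' s).2 * h1

theorem exists_angle_of_dot_self_eq_one {V V' : ℝ → ℝ × ℝ} (hV : ∀ s, HasDerivAt V (V' s) s)
    (hV' : Continuous V') (hunit : ∀ s, dot (V s) (V s) = 1) :
    ∃ θ : ℝ → ℝ, (∀ s, HasDerivAt θ (dot (V' s) (perp (V s))) s) ∧ ∀ s, V s = unitVec (θ s) := by
  set k : ℝ → ℝ := fun s => dot (V' s) (perp (V s))
  have hk : Continuous k := by
    have hVc : Continuous V := continuous_iff_continuousAt.2 fun s => (hV s).continuousAt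
    simp only [k, dot, perp]; fun_prop
  obtain ⟨θ₀, hθ₀⟩ := exists_unitVec_eq (hunit 0)
  set θ : ℝ → ℝ := fun s => θ₀ + ∫ t in (0 : ℝ)..s, k t
  have hθ : ∀ s, HasDerivAt θ (k s) s := fun s =>
    (hk.integral_hasStrictDerivAt 0 s).hasDerivAt.const_add θ₀
  refine ⟨θ, hθ, fun s => eq_of_dot_self_eq_one (hunit s) (dot_unitVec_self _) ?_⟩
  -- with `e = unitVec θ` and `V' = k • perp V`, the derivative of `⟪V, e⟫` is
  -- `k (⟪perp V, e⟫ + ⟪V, perp e⟫) = 0`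
  have hconst : ∀ s, HasDerivAt (fun s => dot (V s) (unitVec (θ s))) 0 s := by
    intro s
    refine ((hV s).dot ((hasDerivAt_unitVec (θ s)).scomp s (hθ s))).congr_deriv ?_
    rw [eq_smul_perp_of_dot_self_eq_one hV hunit, dot_smul_left, dot_perp_comm,
      Function.comp_apply, dot_smul_right]
    ring
  have := is_const_of_deriv_eq_zero (fun s => (hconst s).differentiableAt)
    (fun s => (hconst s).deriv) s 0
  simpa [this, θ, ← hθ₀] using hunit 0

theorem StrictMonoOn.exists_continuous_rightInvOn_Icc {f : ℝ → ℝ} {a b : ℝ} (hab : a ≤ b)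
    (hf : ContinuousOn f (Icc a b)) (hmono : StrictMonoOn f (Icc a b)) :
    ∃ g : ℝ → ℝ, Continuous g ∧ (∀ y, g y ∈ Icc a b) ∧ RightInvOn g f (Icc (f a) (f b)) := by
  have hmaps : ∀ x ∈ Icc a b, f x ∈ Icc (f a) (f b) := fun x hx =>
    ⟨hmono.monotoneOn (left_mem_Icc.2 hab) hx hx.1, hmono.monotoneOn hx (right_mem_Icc.2 hab) hx.2⟩
  have hfab : f a ≤ f b := (hmaps a (left_mem_Icc.2 hab)).2
  let F : Icc a b → Icc (f a) (f b) := fun x => ⟨f x, hmaps x x.2⟩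
  have hF : Continuous F := hf.domRestrict.subtype_mk _
  have hbij : Function.Bijective F := by
    refine ⟨fun x y hxy => Subtype.ext (hmono.injOn x.2 y.2 (congrArg Subtype.val hxy)), ?_⟩
    rintro ⟨y, hy⟩
    obtain ⟨x, hx, rfl⟩ := intermediate_value_Icc hab hf hy
    exact ⟨⟨x, hx⟩, rfl⟩
  let H := Continuous.homeoOfEquivCompactToT2 (f := Equiv.ofBijective F hbij) hF
  refine ⟨fun y => H.symm (projIcc (f a) (f b) hfab y),
    continuous_subtype_val.comp (H.symm.continuous.comp continuous_projIcc),
    fun y => (H.symm _).2, fun y hy => ?_⟩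
  show f (H.symm _ : ℝ) = y
  rw [projIcc_of_mem hfab hy]
  exact congrArg Subtype.val (H.apply_symm_apply ⟨y, hy⟩)

theorem StrictAntiOn.exists_continuous_rightInvOn_Icc {f : ℝ → ℝ} {a b : ℝ} (hab : a ≤ b)
    (hf : ContinuousOn f (Icc a b)) (hanti : StrictAntiOn f (Icc a b)) :
    ∃ g : ℝ → ℝ, Continuous g ∧ (∀ y, g y ∈ Icc a b) ∧ RightInvOn g f (Icc (f b) (f a)) := by
  obtain ⟨g, hgc, hg, hinv⟩ := hanti.neg.exists_continuous_rightInvOn_Icc hab hf.neg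
  refine ⟨fun y => g (-y), hgc.comp continuous_neg, fun y => hg _, fun y hy => ?_⟩
  simpa using hinv (show -y ∈ Icc (-f a) (-f b) from ⟨neg_le_neg hy.2, neg_le_neg hy.1⟩)

/-- The descending branch of the arc `(ξ, η)` passes from the right of the ascending one
(at height `0`) to its left (just below the top), so the two branches meet. -/
theorem exists_crossing {η ξ : ℝ → ℝ} {s₀ sₕ sₚ s_d s₂ : ℝ}
    (hη : ContinuousOn η (Icc s₀ s₂)) (hξ : ContinuousOn ξ (Icc s₀ s₂))
    (h₀ₕ : s₀ < sₕ) (hₕₚ : sₕ < sₚ) (hₚd : sₚ < s_d) (hd₂ : s_d < s₂)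
    (hasc : StrictMonoOn η (Icc s₀ sₚ)) (hdesc : StrictAntiOn η (Icc sₚ s₂))
    (hξanti : StrictAntiOn ξ (Icc sₕ s_d))
    (hη₀ : η s₀ = 0) (hη₂ : η s₂ = 0) (hξ₀₂ : ξ s₀ < ξ s₂) :
    ∃ a b, s₀ < a ∧ a < b ∧ b < s₂ ∧ η a = η b ∧ ξ a = ξ b := by
  have h₀ₚ : s₀ < sₚ := h₀ₕ.trans hₕₚ
  have hₚ₂ : sₚ < s₂ := hₚd.trans hd₂
  have hsub₁ : Icc s₀ sₚ ⊆ Icc s₀ s₂ := Icc_subset_Icc_right hₚ₂.le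
  have hsub₂ : Icc sₚ s₂ ⊆ Icc s₀ s₂ := Icc_subset_Icc_left h₀ₚ.le
  obtain ⟨g₁, hg₁c, hg₁, hinv₁⟩ := hasc.exists_continuous_rightInvOn_Icc h₀ₚ.le (hη.mono hsub₁)
  obtain ⟨g₂, hg₂c, hg₂, hinv₂⟩ := hdesc.exists_continuous_rightInvOn_Icc hₚ₂.le (hη.mono hsub₂)
  rw [hη₀] at hinv₁
  rw [hη₂] at hinv₂
  have mₕ : sₕ ∈ Icc s₀ sₚ := ⟨h₀ₕ.le, hₕₚ.le⟩
  have md : s_d ∈ Icc sₚ s₂ := ⟨hₚd.le, hd₂.le⟩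
  have m₀ := left_mem_Icc.2 h₀ₚ.le
  have mₚ := right_mem_Icc.2 h₀ₚ.le
  have mₚ' := left_mem_Icc.2 hₚ₂.le
  have m₂ := right_mem_Icc.2 hₚ₂.le
  -- a level `y₁` just below the top, above `η sₕ` and `η s_d`
  obtain ⟨y₁, hy₁, hy₁ₚ⟩ := exists_between (max_lt (hasc mₕ mₚ hₕₚ) (hdesc mₚ' md hₚd))
  rw [max_lt_iff] at hy₁
  have hy₁₀ : 0 < y₁ := by linarith [hasc m₀ mₕ h₀ₕ]
  have hI : ∀ y ∈ Icc 0 y₁, y ∈ Icc 0 (η sₚ) := fun y hy => ⟨hy.1, hy.2.trans hy₁ₚ.le⟩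
  have hI₀ := hI 0 (left_mem_Icc.2 hy₁₀.le)
  have hI₁ := hI y₁ (right_mem_Icc.2 hy₁₀.le)
  -- the horizontal gap between the two branches changes sign between the levels `0` and `y₁`
  set gap : ℝ → ℝ := fun y => ξ (g₂ y) - ξ (g₁ y)
  have hgap : ContinuousOn gap (Icc 0 y₁) :=
    (hξ.comp hg₂c.continuousOn fun y _ => hsub₂ (hg₂ y)).sub
      (hξ.comp hg₁c.continuousOn fun y _ => hsub₁ (hg₁ y))
  have hgap₀ : 0 < gap 0 := by
    have e₁ : g₁ 0 = s₀ := hasc.injOn (hg₁ 0) m₀ (by rw [hinv₁ hI₀, hη₀])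
    have e₂ : g₂ 0 = s₂ := hdesc.injOn (hg₂ 0) m₂ (by rw [hinv₂ hI₀, hη₂])
    simp only [gap, e₁, e₂, sub_pos, hξ₀₂]
  have hgap₁ : gap y₁ < 0 := by
    have hₕa : sₕ < g₁ y₁ := (hasc.lt_iff_lt mₕ (hg₁ y₁)).1 (by rw [hinv₁ hI₁]; exact hy₁.1)
    have haₚ : g₁ y₁ < sₚ := (hasc.lt_iff_lt (hg₁ y₁) mₚ).1 (by rw [hinv₁ hI₁]; exact hy₁ₚ)
    have hₚb : sₚ < g₂ y₁ := (hdesc.lt_iff_gt (hg₂ y₁) mₚ').1 (by rw [hinv₂ hI₁]; exact hy₁ₚ)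
    have hbd : g₂ y₁ < s_d := (hdesc.lt_iff_gt md (hg₂ y₁)).1 (by rw [hinv₂ hI₁]; exact hy₁.2)
    have := hξanti ⟨hₕa.le, (haₚ.trans hₚd).le⟩ ⟨(hₕₚ.trans hₚb).le, hbd.le⟩ (haₚ.trans hₚb)
    simp only [gap, sub_neg, this]
  obtain ⟨y, hy, hgapy⟩ := intermediate_value_Ioo' hy₁₀.le hgap ⟨hgap₁, hgap₀⟩
  have hIy := hI y (Ioo_subset_Icc_self hy)
  have hη₀y : η s₀ < η (g₁ y) := by rw [hinv₁ hIy, hη₀]; exact hy.1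
  have hη₂y : η s₂ < η (g₂ y) := by rw [hinv₂ hIy, hη₂]; exact hy.1
  have hyₚ : y < η sₚ := hy.2.trans hy₁ₚ
  refine ⟨g₁ y, g₂ y, (hasc.lt_iff_lt m₀ (hg₁ y)).1 hη₀y, ?_, (hdesc.lt_iff_gt m₂ (hg₂ y)).1 hη₂y,
    by rw [hinv₁ hIy, hinv₂ hIy], (sub_eq_zero.1 hgapy).symm⟩
  calc g₁ y < sₚ := (hasc.lt_iff_lt (hg₁ y) mₚ).1 (by rwa [hinv₁ hIy])
    _ < g₂ y := (hdesc.lt_iff_gt (hg₂ y) mₚ').1 (by rwa [hinv₂ hIy])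

theorem exists_zero_deriv_nonpos_of_pos_of_neg {w w' : ℝ → ℝ} {a b : ℝ} (hab : a ≤ b)
    (hc : ContinuousOn w (Icc a b)) (hw : ∀ t ∈ Ioo a b, HasDerivAt w (w' t) t)
    (ha : 0 < w a) (hb : w b < 0) : ∃ t ∈ Ioo a b, w t = 0 ∧ w' t ≤ 0 := by
  -- the first zero of `w` after `a`
  set Z := Icc a b ∩ w ⁻¹' {0}
  have hZ : IsClosed Z := hc.preimage_isClosed_of_isClosed isClosed_Icc isClosed_singleton
  have hzero : ∀ u ∈ Icc a b, w u ≤ 0 → ∃ z ∈ Z, z ≤ u := fun u hu hwu => by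
    obtain ⟨z, hz, hwz⟩ := intermediate_value_Icc' hu.1 (hc.mono (Icc_subset_Icc_right hu.2))
      ⟨hwu, ha.le⟩
    exact ⟨z, ⟨⟨hz.1, hz.2.trans hu.2⟩, hwz⟩, hz.2⟩
  obtain ⟨z, hzZ, -⟩ := hzero b (right_mem_Icc.2 hab) hb.le
  have hbdd : BddBelow Z := ⟨a, fun u hu => hu.1.1⟩
  set t₀ := sInf Z
  obtain ⟨ht₀, hwt₀ : w t₀ = 0⟩ := hZ.csInf_mem ⟨z, hzZ⟩ hbdd
  have hpos : ∀ u ∈ Ico a t₀, 0 < w u := fun u hu => by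
    by_contra! hwu
    obtain ⟨z, hz, hzu⟩ := hzero u ⟨hu.1, hu.2.le.trans ht₀.2⟩ hwu
    exact (csInf_le hbdd hz).trans hzu |>.not_gt hu.2
  have hat₀ : a < t₀ := ht₀.1.lt_of_ne fun h => ha.ne' (by rw [h, hwt₀])
  have ht₀b : t₀ < b := ht₀.2.lt_of_ne fun h => hb.ne (by rw [← h, hwt₀])
  refine ⟨t₀, ⟨hat₀, ht₀b⟩, hwt₀, ?_⟩
  -- to the left of `t₀` the difference quotients are negative
  refine le_of_tendsto (hw t₀ ⟨hat₀, ht₀b⟩).tendsto_slope_zero_left ?_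
  filter_upwards [Ioo_mem_nhdsLT (sub_neg.2 hat₀)] with t ht
  rw [hwt₀, sub_zero, smul_eq_mul]
  exact mul_nonpos_of_nonpos_of_nonneg (inv_nonpos.2 ht.2.le)
    (hpos _ ⟨by linarith [ht.1], by linarith [ht.2]⟩).le

theorem Function.Periodic.exists_zero_deriv_nonpos {w w' : ℝ → ℝ} {T : ℝ}
    (hper : Function.Periodic w T) (hT : 0 < T) (hw : ∀ t, HasDerivAt w (w' t) t) {z : ℝ}
    (hz : w z = 0) : ∃ t, w t = 0 ∧ w' t ≤ 0 := by
  rcases le_or_gt (w' z) 0 with hz' | hz'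
  · exact ⟨z, hz, hz'⟩
  -- `w` is positive just after `z` and negative just before `z`, hence just before `z + T`
  obtain ⟨t₁, ht₁, ht₁I⟩ := (((hw z).tendsto_slope_zero_right.eventually_const_lt hz').and
    (Ioo_mem_nhdsGT (half_pos hT))).exists
  obtain ⟨t₂, ht₂, ht₂I⟩ := (((hw z).tendsto_slope_zero_left.eventually_const_lt hz').and
    (Ioo_mem_nhdsLT (neg_lt_zero.2 (half_pos hT)))).exists
  rw [hz, sub_zero, smul_eq_mul] at ht₁ ht₂
  have hw₁ : 0 < w (z + t₁) := pos_of_mul_pos_right ht₁ (inv_pos.2 ht₁I.1).le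
  have hw₂ : w (z + t₂ + T) < 0 := by
    rw [hper]; exact neg_of_mul_pos_right ht₂ (inv_nonpos.2 ht₂I.2.le)
  obtain ⟨t, -, ht⟩ := exists_zero_deriv_nonpos_of_pos_of_neg
    (by linarith [ht₁I.2, ht₂I.1] : z + t₁ ≤ z + t₂ + T)
    (fun t _ => (hw t).continuousAt.continuousWithinAt) (fun t _ => hw t) hw₁ hw₂
  exact ⟨t, ht⟩

section QuasiPeriodic

variable {f : ℝ → ℝ} {L T : ℝ}

theorem add_int_mul_of_add_eq (h : ∀ s, f (s + L) = f s + T) (j : ℤ) (s : ℝ) :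
    f (s + j * L) = f s + j * T := by
  have hnat : ∀ (n : ℕ) s, f (s + n * L) = f s + n * T := by
    intro n
    induction n with
    | zero => simp
    | succ n ih => intro s; push_cast; rw [add_one_mul, ← add_assoc, h, ih]; ring
  obtain ⟨n, rfl | rfl⟩ := Int.eq_nat_or_neg j
  · exact_mod_cast hnat n s
  · have := hnat n (s + -n * L)
    rw [add_assoc, neg_mul, neg_add_cancel, add_zero] at this
    push_cast
    rw [neg_mul, neg_mul]
    linarith

theorem surjective_of_add_eq (hf : Continuous f) (h : ∀ s, f (s + L) = f s + T) (hT : 0 < T) :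
    Function.Surjective f := fun y => by
  obtain ⟨n, hn⟩ := exists_nat_ge (|y - f 0| / T)
  have hn' : |y - f 0| ≤ n * T := (div_le_iff₀ hT).1 hn
  have hlo := add_int_mul_of_add_eq h (-n) 0
  have hhi := add_int_mul_of_add_eq h n 0
  push_cast at hlo hhi
  rw [zero_add] at hlo hhi
  have hy : y ∈ uIcc (f (-n * L)) (f (n * L)) := by
    rw [hlo, hhi, mem_uIcc]
    left
    constructor <;> linarith [neg_abs_le (y - f 0), le_abs_self (y - f 0)]
  obtain ⟨x, -, hx⟩ := intermediate_value_uIcc hf.continuousOn hy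
  exact ⟨x, hx⟩

theorem add_eq_of_hasDerivAt_of_periodic {k : ℝ → ℝ} (hf : ∀ s, HasDerivAt f (k s) s)
    (hk : Function.Periodic k L) (s : ℝ) : f (s + L) = f s + (f L - f 0) := by
  have hd : ∀ s, HasDerivAt (fun s => f (s + L) - f s) 0 s := fun s => by
    have := ((hf (s + L)).comp_add_const s L).sub (hf s)
    rwa [hk s, sub_self] at this
  have := is_const_of_deriv_eq_zero (fun s => (hd s).differentiableAt) (fun s => (hd s).deriv) s 0
  simp only [zero_add] at this
  linarith

end QuasiPeriodic

theorem Function.Periodic.ne_of_injOn_Ico {α : Type*} {v : ℝ → α} {L : ℝ}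
    (hper : Function.Periodic v L) (hL : 0 < L) (hinj : InjOn v (Ico 0 L)) {x y : ℝ}
    (hxy : x < y) (hyx : y < x + L) : v x ≠ v y := by
  intro hv
  have hmod : ∀ z, v (toIcoMod hL 0 z) = v z := fun z => hper.sub_zsmul_eq _
  obtain ⟨n, hn⟩ := (toIcoMod_eq_toIcoMod hL).1 <|
    hinj (toIcoMod_mem_Ico' hL x) (toIcoMod_mem_Ico' hL y) (by rw [hmod, hmod, hv])
  rw [zsmul_eq_mul] at hn
  have h₀ : (0 : ℝ) < n := by by_contra! h; nlinarith
  have h₁ : (n : ℝ) < 1 := by by_contra! h; nlinarith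
  have : (0 : ℤ) < n := by exact_mod_cast h₀
  have : n < 1 := by exact_mod_cast h₁
  omega

theorem two_div_pi_mul_min_le_sin {x : ℝ} (h₀ : 0 ≤ x) (hπ : x ≤ π) :
    2 / π * min x (π - x) ≤ sin x := by
  rcases le_total x (π / 2) with h | h
  · exact (mul_le_mul_of_nonneg_left (min_le_left _ _) (by positivity)).trans (mul_le_sin h₀ h)
  · refine (mul_le_mul_of_nonneg_left (min_le_right _ _) (by positivity)).trans ?_
    simpa [sin_pi_sub] using mul_le_sin (x := π - x) (by linarith) (by linarith)

section AngleParametrized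

variable {P : ℝ → ℝ × ℝ} {r : ℝ → ℝ}

/-- If after one full turn of its tangent a locally convex arc is back on its initial tangent
line, ahead of its starting point, then it has crossed itself. -/
theorem exists_eq_of_chord_along_tangent (hr : ∀ t, 0 < r t)
    (hP : ∀ t, HasDerivAt P (r t • unitVec t) t) {t₀ : ℝ}
    (hw : dot (P (t₀ + 2 * π) - P t₀) (perp (unitVec t₀)) = 0)
    (hg : 0 < dot (P (t₀ + 2 * π) - P t₀) (unitVec t₀)) :
    ∃ a b, t₀ < a ∧ a < b ∧ b < t₀ + 2 * π ∧ P a = P b := by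
  set η : ℝ → ℝ := fun t => dot (P t - P t₀) (perp (unitVec t₀))
  set ξ : ℝ → ℝ := fun t => dot (P t - P t₀) (unitVec t₀)
  have hη : ∀ t, HasDerivAt η (r t * sin (t - t₀)) t := fun t => by
    simpa [dot_smul_left, dot_unitVec_perp_unitVec] using
      ((hP t).sub_const (P t₀)).dot_const (perp (unitVec t₀))
  have hξ : ∀ t, HasDerivAt ξ (r t * cos (t - t₀)) t := fun t => by
    simpa [dot_smul_left, dot_unitVec_unitVec] using
      ((hP t).sub_const (P t₀)).dot_const (unitVec t₀)
  have hηc : Continuous η := continuous_iff_continuousAt.2 fun t => (hη t).continuousAt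
  have hξc : Continuous ξ := continuous_iff_continuousAt.2 fun t => (hξ t).continuousAt
  have hasc : StrictMonoOn η (Icc t₀ (t₀ + π)) := by
    refine strictMonoOn_of_hasDerivWithinAt_pos (convex_Icc _ _) hηc.continuousOn
      (fun t _ => (hη t).hasDerivWithinAt) fun t ht => ?_
    rw [interior_Icc] at ht
    exact mul_pos (hr t) (sin_pos_of_pos_of_lt_pi (by linarith [ht.1]) (by linarith [ht.2]))
  have hdesc : StrictAntiOn η (Icc (t₀ + π) (t₀ + 2 * π)) := by
    refine strictAntiOn_of_hasDerivWithinAt_neg (convex_Icc _ _) hηc.continuousOn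
      (fun t _ => (hη t).hasDerivWithinAt) fun t ht => ?_
    rw [interior_Icc] at ht
    have := sin_pos_of_pos_of_lt_pi (x := t - t₀ - π) (by linarith [ht.1]) (by linarith [ht.2])
    rw [sin_sub_pi] at this
    exact mul_neg_of_pos_of_neg (hr t) (by linarith)
  have hξanti : StrictAntiOn ξ (Icc (t₀ + π / 2) (t₀ + (π + π / 2))) := by
    refine strictAntiOn_of_hasDerivWithinAt_neg (convex_Icc _ _) hξc.continuousOn
      (fun t _ => (hξ t).hasDerivWithinAt) fun t ht => ?_
    rw [interior_Icc] at ht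
    exact mul_neg_of_pos_of_neg (hr t)
      (cos_neg_of_pi_div_two_lt_of_lt (by linarith [ht.1]) (by linarith [ht.2]))
  obtain ⟨a, b, ha, hab, hb, hηab, hξab⟩ := exists_crossing hηc.continuousOn hξc.continuousOn
    (by linarith [pi_pos] : t₀ < t₀ + π / 2) (by linarith [pi_pos])
    (by linarith [pi_pos] : t₀ + π < t₀ + (π + π / 2)) (by linarith [pi_pos])
    hasc hdesc hξanti (by simp [η, dot]) hw (by simpa [ξ, dot] using hg)
  refine ⟨a, b, ha, hab, hb, ?_⟩
  simpa using eq_of_dot_unitVec_eq hξab hηab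

/-- With `D t = P (t + 2π) - P t` and `e = unitVec t`, the function `⟪D, perp e⟫` has derivative
`-⟪D, e⟫`, and its values at `2πj`, `j < N`, telescope to `0`; take a downward zero of it. -/
theorem exists_chord_along_tangent (hP : ∀ t, HasDerivAt P (r t • unitVec t) t) {N : ℕ}
    (hN : N ≠ 0) (hper : Function.Periodic P (N * (2 * π))) (hchord : ∀ t, P (t + 2 * π) ≠ P t) :
    ∃ t₀, dot (P (t₀ + 2 * π) - P t₀) (perp (unitVec t₀)) = 0 ∧
      0 < dot (P (t₀ + 2 * π) - P t₀) (unitVec t₀) := by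
  set D : ℝ → ℝ × ℝ := fun t => P (t + 2 * π) - P t
  set w : ℝ → ℝ := fun t => dot (D t) (perp (unitVec t))
  have hD : ∀ t, HasDerivAt D ((r (t + 2 * π) - r t) • unitVec t) t := fun t => by
    have := ((hP (t + 2 * π)).comp_add_const t (2 * π)).sub (hP t)
    rwa [unitVec_add_two_pi, ← sub_smul] at this
  have hw : ∀ t, HasDerivAt w (-dot (D t) (unitVec t)) t := fun t => by
    refine ((hD t).dot (hasDerivAt_perp_unitVec t)).congr_deriv ?_
    rw [dot_smul_left, dot_perp_self]
    simp only [dot, Prod.fst_neg, Prod.snd_neg]; ring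
  have hwper : Function.Periodic w (N * (2 * π)) := fun t => by
    simp only [w, D, add_right_comm t, hper _, unitVec_add_nat_mul_two_pi]
  have hwj : ∀ j : ℕ, w (j * (2 * π)) = (P ((j + 1 : ℕ) * (2 * π))).2 - (P (j * (2 * π))).2 := by
    intro j
    have he : unitVec (j * (2 * π)) = unitVec 0 := by simpa using unitVec_add_nat_mul_two_pi 0 j
    show dot (D _) (perp (unitVec _)) = _
    rw [he]
    simp only [D, dot, perp, unitVec, cos_zero, sin_zero, Prod.snd_sub]
    push_cast; ring_nf
  have hsum : ∑ j ∈ Finset.range N, w (j * (2 * π)) = 0 := by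
    rw [Finset.sum_congr rfl fun j _ => hwj j,
      Finset.sum_range_sub (fun j : ℕ => (P (j * (2 * π))).2)]
    simpa [sub_eq_zero] using congrArg Prod.snd (hper 0)
  have hne : (Finset.range N).Nonempty := Finset.nonempty_range_iff.2 hN
  obtain ⟨i, -, hi⟩ := Finset.exists_le_of_sum_le hne (hsum.trans Finset.sum_const_zero.symm).le
  obtain ⟨j, -, hj⟩ := Finset.exists_le_of_sum_le hne (hsum.trans Finset.sum_const_zero.symm).ge
  have hwc : Continuous w := continuous_iff_continuousAt.2 fun t => (hw t).continuousAt
  obtain ⟨z, -, hz⟩ := intermediate_value_uIcc hwc.continuousOn (mem_uIcc.2 (Or.inl ⟨hi, hj⟩))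
  obtain ⟨t₀, hwt₀, hgt₀⟩ := hwper.exists_zero_deriv_nonpos (by positivity) hw hz
  refine ⟨t₀, hwt₀, (neg_nonpos.1 hgt₀).lt_of_ne fun hg => hchord t₀ ?_⟩
  refine sub_eq_zero.1 (eq_of_dot_unitVec_eq (x := D t₀) (y := 0) (t := t₀) ?_ ?_)
  · rw [← hg]; simp [dot]
  · rw [show dot (D t₀) _ = w t₀ from rfl, hwt₀]; simp [dot]

theorem exists_eq_within_turn_of_periodic (hr : ∀ t, 0 < r t)
    (hP : ∀ t, HasDerivAt P (r t • unitVec t) t) {N : ℕ} (hN : N ≠ 0)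
    (hper : Function.Periodic P (N * (2 * π))) : ∃ a b, a < b ∧ b ≤ a + 2 * π ∧ P a = P b := by
  by_contra! h
  obtain ⟨t₀, hw, hg⟩ := exists_chord_along_tangent hP hN hper fun t =>
    (h t (t + 2 * π) (by linarith [pi_pos]) le_rfl).symm
  obtain ⟨a, b, ha, hab, hb, hPab⟩ := exists_eq_of_chord_along_tangent hr hP hw hg
  exact h a b hab (by linarith) hPab

end AngleParametrized

/-- Rotation index theorem for curves of positive curvature: reparametrized by its tangent angle,
a closed curve turning `n ≥ 2` times meets itself within a single turn. -/
theorem eq_one_of_add_eq_nat_mul_two_pi {v : ℝ → ℝ × ℝ} {θ k : ℝ → ℝ} {L : ℝ} (hL : 0 < L)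
    (hper : Function.Periodic v L) (hsimple : InjOn v (Ico 0 L)) (hk : ∀ s, 0 < k s)
    (hθ : ∀ s, HasDerivAt θ (k s) s) (hv : ∀ s, HasDerivAt v (unitVec (θ s)) s) {n : ℕ}
    (hn : n ≠ 0) (hturn : ∀ s, θ (s + L) = θ s + n * (2 * π)) : n = 1 := by
  by_contra hn₁
  have hmono : StrictMono θ := strictMono_of_hasDerivAt_pos hθ hk
  have hθc : Continuous θ := continuous_iff_continuousAt.2 fun s => (hθ s).continuousAt
  let e := hmono.orderIsoOfSurjective θ (surjective_of_add_eq hθc hturn (by positivity))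
  have hθι : ∀ t, θ (e.symm t) = t := e.apply_symm_apply
  have hι : ∀ t, HasDerivAt e.symm (k (e.symm t))⁻¹ t := fun t =>
    HasDerivAt.of_local_left_inverse e.symm.continuous.continuousAt (hθ _) (hk _).ne'
      (Eventually.of_forall hθι)
  have hshift : ∀ t, e.symm (t + n * (2 * π)) = e.symm t + L := fun t =>
    hmono.injective (by rw [hθι, hturn, hθι])
  have hP : ∀ t, HasDerivAt (v ∘ e.symm) ((k (e.symm t))⁻¹ • unitVec t) t := fun t => by
    simpa only [hθι] using (hv (e.symm t)).scomp t (hι t)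
  obtain ⟨a, b, hab, hba, hPab⟩ := exists_eq_within_turn_of_periodic (fun t => inv_pos.2 (hk _))
    hP hn fun t => by simp only [Function.comp_apply, hshift, hper _]
  have h2π : a + 2 * π < a + n * (2 * π) := by
    have : (2 : ℝ) ≤ n := by exact_mod_cast (by omega : 2 ≤ n)
    nlinarith [pi_pos]
  refine hper.ne_of_injOn_Ico hL hsimple (e.symm.strictMono hab) ?_ hPab
  calc e.symm b ≤ e.symm (a + 2 * π) := e.symm.monotone hba
    _ < e.symm (a + n * (2 * π)) := e.symm.strictMono h2π
    _ = e.symm a + L := hshift a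

theorem mul_min_le_enorm2_unitVec_sub {θ : ℝ → ℝ} {L c : ℝ} (hL : 0 < L) (hc : 0 ≤ c)
    (hturn : ∀ s, θ (s + L) = θ s + 2 * π)
    (hgrowth : ∀ p q, p ≤ q → c * (q - p) ≤ θ q - θ p) (s s' m : ℝ)
    (hm : m = |s - s'| - L * ⌊|s - s'| / L⌋) :
    2 * c / π * min m (L - m) ≤ enorm2 (unitVec (θ s) - unitVec (θ s')) := by
  rw [enorm2_unitVec_sub_unitVec]
  wlog hs : s' ≤ s generalizing s s'
  · have := this s' s (by rwa [abs_sub_comm]) (le_of_not_ge hs)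
    rwa [← neg_sub (θ s), neg_div, sin_neg, abs_neg] at this
  rw [abs_of_nonneg (sub_nonneg.2 hs)] at hm
  set j := ⌊(s - s') / L⌋
  have hm₀ : 0 ≤ m := by rw [hm, mul_comm]; exact Int.sub_floor_div_mul_nonneg _ hL
  have hmL : m < L := by rw [hm, mul_comm]; exact Int.sub_floor_div_mul_lt _ hL
  -- the angle turned from `s'` to `s`, modulo full turns
  set δ := θ (s' + m) - θ s'
  have hδ₀ : c * m ≤ δ := by simpa using hgrowth s' (s' + m) (by linarith)
  have hδ₁ : δ ≤ 2 * π - c * (L - m) := by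
    have := hgrowth (s' + m) (s' + L) (by linarith)
    rw [hturn, show s' + L - (s' + m) = L - m by ring] at this
    linarith
  have hsplit : (θ s - θ s') / 2 = δ / 2 + j * π := by
    have := add_int_mul_of_add_eq hturn j (s' + m)
    rw [show s' + m + j * L = s by rw [hm]; ring] at this
    rw [this]; ring
  rw [hsplit, sin_add_int_mul_pi, abs_mul, abs_neg_one_zpow, one_mul,
    abs_of_nonneg (sin_nonneg_of_nonneg_of_le_pi (by nlinarith) (by nlinarith))]
  have hmin : c / 2 * min m (L - m) ≤ min (δ / 2) (π - δ / 2) := by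
    rw [mul_min_of_nonneg _ _ (by positivity)]
    exact min_le_min (by linarith) (by linarith)
  have := two_div_pi_mul_min_le_sin (x := δ / 2) (by nlinarith) (by nlinarith)
  have := mul_le_mul_of_nonneg_left hmin (by positivity : (0 : ℝ) ≤ 2 / π)
  calc 2 * c / π * min m (L - m) = 2 * (2 / π * (c / 2 * min m (L - m))) := by ring
    _ ≤ 2 * sin (δ / 2) := by linarith

/-- For a strictly convex simple closed `C²` arc-length curve (curvature `≥ c_k > 0`),
the tangent map `v'` is invertible on a period with Lipschitz inverse:
`|v'(s) − v'(s')| ≥ c · min(|s−s'| mod L, L − (|s−s'| mod L))`. -/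
theorem tangent_map_lower_bound (L : ℝ) (hL : 0 < L) (v : ℝ → ℝ × ℝ)
    (hper : ∀ s, v (s + L) = v s) (hreg : ContDiff ℝ 2 v)
    (hunit : ∀ s, dot (deriv v s) (deriv v s) = 1)
    (hsimple : Set.InjOn v (Set.Ico 0 L))
    (ck : ℝ) (hck : 0 < ck) (hcurv : ∀ s, ck ≤ curv v s) :
    ∃ c : ℝ, 0 < c ∧ ∀ s s' : ℝ,
      ∀ m : ℝ, m = |s - s'| - L * (⌊|s - s'| / L⌋ : ℤ) →
        c * min m (L - m) ≤ enorm2 (deriv v s - deriv v s') := by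
  have hV : ContDiff ℝ 1 (deriv v) := hreg.deriv' (n := 1)
  obtain ⟨θ, hθ : ∀ s, HasDerivAt θ (curv v s) s, hVθ⟩ := exists_angle_of_dot_self_eq_one
    (fun s => (hV.differentiable one_ne_zero s).hasDerivAt) hV.continuous_deriv_one hunit
  have hv : ∀ s, HasDerivAt v (unitVec (θ s)) s := fun s =>
    hVθ s ▸ (hreg.differentiable two_ne_zero s).hasDerivAt
  have hVper : Function.Periodic (deriv v) L := Function.Periodic.deriv hper
  have hkper : Function.Periodic (curv v) L := fun s => by
    simp only [curv, hVper s, hVper.deriv s]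
  have hturn := add_eq_of_hasDerivAt_of_periodic hθ hkper
  have hgrowth : ∀ p q, p ≤ q → ck * (q - p) ≤ θ q - θ p := fun p q hpq =>
    mul_sub_le_image_sub_of_le_deriv (fun s => (hθ s).differentiableAt)
      (fun s => (hθ s).deriv ▸ hcurv s) hpq
  obtain ⟨n, hn⟩ := exists_int_of_unitVec_eq (a := θ L) (b := θ 0) <| by
    rw [← hVθ, ← hVθ, ← zero_add L, hVper 0]
  have hn₀ : 0 < n := by
    have : (0 : ℝ) < n * (2 * π) := by rw [← hn]; nlinarith [hgrowth 0 L hL.le]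
    exact_mod_cast pos_of_mul_pos_left this (by positivity)
  lift n to ℕ using hn₀.le
  have hturn' : ∀ s, θ (s + L) = θ s + n * (2 * π) := fun s => by rw [hturn s, hn]; push_cast; ring
  obtain rfl : n = 1 := eq_one_of_add_eq_nat_mul_two_pi hL hper hsimple
    (fun s => hck.trans_le (hcurv s)) hθ hv (by omega) hturn'
  refine ⟨2 * ck / π, by positivity, fun s s' m hm => ?_⟩
  rw [hVθ s, hVθ s']
  exact mul_min_le_enorm2_unitVec_sub hL hck.le (by simpa using hturn') hgrowth s s' m hm
end
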